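/- arXiv:2312.02484 — 2 statements merged into one kernel-verified Lean document; each statement's English description precedes it below -/
import Mathlib

section
/- Let ε_i = 1, ε_j ∈ {0,1}, and η ∈ ℝ with ε_i·ε_j + η > 0. Define for f_i, f_j ∈ ℝ: S_i = e^{f_i}, C_i = √(1 + ε_i e^{2f_i}), S_j = e^{f_j}, C_j = √(1 + ε_j e^{2f_j}), and cosh l = C_i C_j + η S_i S_j (assume cosh l > 1 so l > 0 is defined). Then there exist positive constants λ = λ(ε_j, η) and μ = μ(η) such that λ(C_i C_j + S_i S_j) ≤ cosh l ≤ μ(C_i C_j + S_i S_j). -/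
/-- Two-sided comparison for the hyperbolic edge length: with `εᵢ = 1`,
`εⱼ ∈ {0,1}` and `εᵢεⱼ + η > 0`, there are constants `λ, μ > 0`, depending only on
`εⱼ` and `η`, with `λ(CᵢCⱼ + SᵢSⱼ) ≤ cosh l = CᵢCⱼ + η SᵢSⱼ ≤ μ(CᵢCⱼ + SᵢSⱼ)`. -/
theorem stmt_7 (εj η : ℝ) (hεj : εj = 0 ∨ εj = 1) (hstruct : 1 * εj + η > 0) :
    ∃ lam > (0 : ℝ), ∃ mu > (0 : ℝ), ∀ fi fj : ℝ,
      let Si := Real.exp fi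
      let Sj := Real.exp fj
      let Ci := Real.sqrt (1 + Real.exp (2 * fi))
      let Cj := Real.sqrt (1 + εj * Real.exp (2 * fj))
      lam * (Ci * Cj + Si * Sj) ≤ Ci * Cj + η * Si * Sj ∧
        Ci * Cj + η * Si * Sj ≤ mu * (Ci * Cj + Si * Sj) := by
  by_cases hη : 0 < η
  · refine ⟨min 1 η, lt_min one_pos hη, 1 + |η|, by positivity, ?_⟩
    intro fi fj Si Sj Ci Cj
    have hSi : 0 < Si := Real.exp_pos _
    have hSj : 0 < Sj := Real.exp_pos _
    have hCi : 0 ≤ Ci := Real.sqrt_nonneg _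
    have hCj : 0 ≤ Cj := Real.sqrt_nonneg _
    have h1 : min 1 η ≤ 1 := min_le_left _ _
    have h2 : min 1 η ≤ η := min_le_right _ _
    have h3 : η ≤ |η| := le_abs_self η
    constructor
    · nlinarith [mul_nonneg hCi hCj, mul_pos hSi hSj]
    · nlinarith [mul_nonneg hCi hCj, mul_pos hSi hSj]
  · have hεj1 : εj = 1 := by
      rcases hεj with h | h
      · exfalso; rw [h] at hstruct; linarith
      · exact h
    have hη1 : -1 < η := by rw [hεj1] at hstruct; linarith
    refine ⟨(1 + η) / 2, by linarith, 1 + |η|, by positivity, ?_⟩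
    intro fi fj Si Sj Ci Cj
    have hSi : 0 < Si := Real.exp_pos _
    have hSj : 0 < Sj := Real.exp_pos _
    have hCi : Si ≤ Ci := by
      have h : Real.sqrt (Real.exp (2 * fi)) = Si := by
        rw [show (2:ℝ) * fi = fi + fi by ring, Real.exp_add,
          Real.sqrt_mul_self (Real.exp_pos fi).le]
      rw [← h]
      exact Real.sqrt_le_sqrt (by linarith)
    have hCj : Sj ≤ Cj := by
      have h : Real.sqrt (Real.exp (2 * fj)) = Real.exp fj := by
        rw [show (2:ℝ) * fj = fj + fj by ring, Real.exp_add,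
          Real.sqrt_mul_self (Real.exp_pos fj).le]
      show Real.exp fj ≤ Real.sqrt (1 + εj * Real.exp (2 * fj))
      rw [hεj1, one_mul, ← h]
      exact Real.sqrt_le_sqrt (by linarith)
    have hCS : Si * Sj ≤ Ci * Cj :=
      mul_le_mul hCi hCj hSj.le (le_trans hSi.le hCi)
    have h3 : η ≤ |η| := le_abs_self η
    have hη0 : η ≤ 0 := le_of_not_gt hη
    constructor
    · nlinarith [mul_pos hSi hSj]
    · have hCC : 0 ≤ Ci * Cj := le_trans (mul_pos hSi hSj).le hCS
      nlinarith [mul_pos hSi hSj, abs_nonneg η, mul_nonneg (abs_nonneg η) hCC]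
end

section
/- Consider a hyperbolic triangle {ijk} with ε_i = 1, ε_j, ε_k ∈ {0,1}, and weights η_{ij}, η_{ik}, η_{jk} satisfying ε_s ε_t + η_{st} > 0 for each edge, with edge lengths defined by cosh l_{st} = C_s C_t + η_{st} S_s S_t where S_s = e^{f_s}, C_s = √(1 + ε_s e^{2f_s}). Then for every ε > 0 there exists L > 0 (depending only on ε and the weights) such that whenever f_i > L and the lengths form a nondegenerate hyperbolic triangle, the inner angle θ_i at vertex i satisfies θ_i < ε. -/
private lemma aux_lb (ε η C S : ℝ) (hε : ε = 0 ∨ ε = 1) (hC1 : 1 ≤ C) (hS : 0 ≤ S)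
    (hC0 : ε = 0 → C = 1) (hSC : ε = 1 → S ≤ C) (hpos : 0 < ε + η) :
    min 1 (ε + η) / 2 * (C + S) ≤ C + η * S := by
  set m := min 1 (ε + η) / 2 with hm
  have hm1 : 2 * m ≤ 1 := by
    have := min_le_left 1 (ε + η); rw [hm]; linarith
  have hm2 : 2 * m ≤ ε + η := by
    have := min_le_right 1 (ε + η); rw [hm]; linarith
  have hm0 : 0 < m := by
    have := lt_min one_pos hpos; rw [hm]; linarith
  rcases hε with h | h
  · have hC' := hC0 h
    subst h
    rw [hC']
    nlinarith [mul_nonneg (by linarith : (0:ℝ) ≤ η - m) hS]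
  · have hSC' := hSC h
    subst h
    rcases le_or_gt 0 η with hη | hη
    · nlinarith [mul_nonneg hm0.le (sub_nonneg.mpr hSC'), mul_nonneg hη hS,
        mul_nonneg (by linarith : (0:ℝ) ≤ 1 - 2*m) (by linarith : (0:ℝ) ≤ C)]
    · nlinarith [mul_nonneg hm0.le (sub_nonneg.mpr hSC'),
        mul_nonneg (by linarith : (0:ℝ) ≤ -η) (sub_nonneg.mpr hSC'),
        mul_nonneg (by linarith : (0:ℝ) ≤ 1 + η - 2*m) (by linarith : (0:ℝ) ≤ C)]

private lemma exp_two_mul' (x : ℝ) : Real.exp (2 * x) = Real.exp x ^ 2 := by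
  rw [two_mul, Real.exp_add, sq]

private lemma cosh_lb (ε η fi f : ℝ) (hε : ε = 0 ∨ ε = 1) (hpos : 0 < ε + η) :
    min 1 (ε + η) / 2 * (Real.exp fi * (Real.sqrt (1 + ε * Real.exp (2 * f)) + Real.exp f))
      ≤ Real.sqrt (1 + Real.exp (2 * fi)) * Real.sqrt (1 + ε * Real.exp (2 * f))
        + η * Real.exp fi * Real.exp f := by
  have hε0 : 0 ≤ ε := by rcases hε with h | h <;> simp [h]
  set C := Real.sqrt (1 + ε * Real.exp (2 * f)) with hCdef
  set S := Real.exp f with hSdef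
  set Si := Real.exp fi with hSidef
  set Ci := Real.sqrt (1 + Real.exp (2 * fi)) with hCidef
  have hS : 0 < S := Real.exp_pos f
  have hSi : 0 < Si := Real.exp_pos fi
  have hC1 : 1 ≤ C := by
    rw [hCdef, Real.one_le_sqrt]
    nlinarith [Real.exp_pos (2 * f)]
  have hC0 : ε = 0 → C = 1 := by
    intro h; rw [hCdef, h]; simp
  have hSC : ε = 1 → S ≤ C := by
    intro h
    have h1 : S = Real.sqrt (Real.exp (2 * f)) := by
      rw [exp_two_mul', Real.sqrt_sq (Real.exp_pos f).le]
    rw [h1, hCdef, h]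
    exact Real.sqrt_le_sqrt (by linarith)
  have hSiCi : Si ≤ Ci := by
    have h1 : Si = Real.sqrt (Real.exp (2 * fi)) := by
      rw [exp_two_mul', Real.sqrt_sq (Real.exp_pos fi).le]
    rw [h1, hCidef]
    exact Real.sqrt_le_sqrt (by linarith)
  have key := aux_lb ε η C S hε hC1 hS.le hC0 hSC hpos
  have hCpos : (0:ℝ) < C := lt_of_lt_of_le one_pos hC1
  nlinarith [mul_le_mul_of_nonneg_left key hSi.le,
    mul_nonneg (sub_nonneg.mpr hSiCi) hCpos.le]

private lemma cosh_ub (εj εk η fj fk : ℝ) (hεj : 0 ≤ εj) (hεk : 0 ≤ εk) :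
    Real.sqrt (1 + εj * Real.exp (2 * fj)) * Real.sqrt (1 + εk * Real.exp (2 * fk))
        + η * Real.exp fj * Real.exp fk
      ≤ (1 + |η|) * ((Real.sqrt (1 + εj * Real.exp (2 * fj)) + Real.exp fj)
          * (Real.sqrt (1 + εk * Real.exp (2 * fk)) + Real.exp fk)) := by
  set Cj := Real.sqrt (1 + εj * Real.exp (2 * fj)) with hCj
  set Ck := Real.sqrt (1 + εk * Real.exp (2 * fk)) with hCk
  have h1 : (0:ℝ) ≤ Cj := Real.sqrt_nonneg _
  have h2 : (0:ℝ) ≤ Ck := Real.sqrt_nonneg _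
  have h3 : (0:ℝ) < Real.exp fj := Real.exp_pos _
  have h4 : (0:ℝ) < Real.exp fk := Real.exp_pos _
  have h5 : η ≤ |η| := le_abs_self η
  have h6 : (0:ℝ) ≤ |η| := abs_nonneg η
  nlinarith [mul_nonneg h1 h2, mul_nonneg h1 h4.le, mul_nonneg h2 h3.le,
    mul_pos h3 h4, mul_nonneg h6 (mul_nonneg h1 h2), mul_nonneg h6 (mul_nonneg h1 h4.le),
    mul_nonneg h6 (mul_nonneg h2 h3.le),
    mul_nonneg (by linarith : (0:ℝ) ≤ 1 + |η| - η) (mul_pos h3 h4).le]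


private lemma sinh_lb' (c s : ℝ) (hc : 2 ≤ c) (hs : 0 < s) (hsq : c ^ 2 = s ^ 2 + 1) :
    c ≤ 2 * s := by
  nlinarith [sq_nonneg (c - 2*s), sq_nonneg (c - 2), mul_pos hs hs]

private lemma cosh_ge_two (m S M c : ℝ) (hm : 0 < m) (hS : 0 < S) (hM : 1 ≤ M)
    (hmS : 2 < m * S) (h : m * (S * M) ≤ c) : 2 ≤ c := by
  nlinarith [mul_nonneg (mul_nonneg hm.le hS.le) (by linarith : (0:ℝ) ≤ M - 1)]

private lemma sq_boost (Kv a Si : ℝ) (ha : 0 < a) (hSi : 1 < Si) (h : 4 * Kv < Si * a) :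
    4 * Kv < a * Si ^ 2 := by
  nlinarith [mul_nonneg (mul_nonneg ha.le (by linarith : (0:ℝ) ≤ Si)) (by linarith : (0:ℝ) ≤ Si - 1)]

private lemma ub_step (Kv δ m1 m2 Si Mj Mk : ℝ) (hδ : 0 < δ) (hm1 : 0 < m1) (hm2 : 0 < m2)
    (hSi : 0 < Si) (hMj : 1 ≤ Mj) (hMk : 1 ≤ Mk) (hKSi : 4 * Kv < m1 * m2 * δ * Si ^ 2) :
    Kv * (Mj * Mk) < δ * ((m1 * (Si * Mj) / 2) * (m2 * (Si * Mk) / 2)) := by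
  have hMM : (0:ℝ) < Mj * Mk := by nlinarith
  nlinarith [mul_pos hMM (by linarith : (0:ℝ) < m1 * m2 * δ * Si ^ 2 - 4 * Kv)]

set_option maxHeartbeats 1600000 in
/-- For Glickenstein's hyperbolic discrete conformal structures with `εᵢ = 1` and the
structure condition on the weights, the inner angle `θᵢ` at the vertex `i` becomes
arbitrarily small once the conformal factor `fᵢ` is sufficiently large. -/
theorem stmt_9 (εj εk ηij ηik ηjk : ℝ)
    (hεj : εj = 0 ∨ εj = 1) (hεk : εk = 0 ∨ εk = 1)
    (h1 : 1 * εj + ηij > 0) (h2 : 1 * εk + ηik > 0) (h3 : εj * εk + ηjk > 0) :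
    ∀ ε > (0 : ℝ), ∃ L > (0 : ℝ), ∀ fi fj fk lij lik ljk θi : ℝ,
      fi > L → 0 < lij → 0 < lik → 0 < ljk →
      Real.cosh lij = Real.sqrt (1 + Real.exp (2 * fi)) *
          Real.sqrt (1 + εj * Real.exp (2 * fj)) + ηij * Real.exp fi * Real.exp fj →
      Real.cosh lik = Real.sqrt (1 + Real.exp (2 * fi)) *
          Real.sqrt (1 + εk * Real.exp (2 * fk)) + ηik * Real.exp fi * Real.exp fk →
      Real.cosh ljk = Real.sqrt (1 + εj * Real.exp (2 * fj)) *
          Real.sqrt (1 + εk * Real.exp (2 * fk)) + ηjk * Real.exp fj * Real.exp fk →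
      -- nondegenerate hyperbolic triangle
      lij + lik > ljk → lij + ljk > lik → lik + ljk > lij →
      -- θᵢ is the inner angle at i, given by the hyperbolic cosine law
      0 ≤ θi → θi ≤ Real.pi →
      Real.cos θi = (Real.cosh lij * Real.cosh lik - Real.cosh ljk) /
          (Real.sinh lij * Real.sinh lik) →
      θi < ε := by
  have hεj0 : 0 ≤ εj := by rcases hεj with h | h <;> simp [h]
  have hεk0 : 0 ≤ εk := by rcases hεk with h | h <;> simp [h]
  have h1' : 0 < εj + ηij := by linarith
  have h2' : 0 < εk + ηik := by linarith
  intro ε hε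
  set ε' := min ε Real.pi with hε'def
  have hε'pos : 0 < ε' := lt_min hε Real.pi_pos
  have hε'pi : ε' ≤ Real.pi := min_le_right ε Real.pi
  have hcosε' : Real.cos ε' < 1 := by
    have h := Real.strictAntiOn_cos ⟨le_rfl, Real.pi_pos.le⟩ ⟨hε'pos.le, hε'pi⟩ hε'pos
    rwa [Real.cos_zero] at h
  set δ := 1 - Real.cos ε' with hδdef
  have hδ : 0 < δ := by rw [hδdef]; linarith
  set m1 := min 1 (εj + ηij) / 2 with hm1def
  set m2 := min 1 (εk + ηik) / 2 with hm2def
  have hm1 : 0 < m1 := by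
    have := lt_min one_pos h1'; rw [hm1def]; linarith
  have hm2 : 0 < m2 := by
    have := lt_min one_pos h2'; rw [hm2def]; linarith
  set K := 1 + |ηjk| with hKdef
  have hK1 : (1:ℝ) ≤ K := by rw [hKdef]; have := abs_nonneg ηjk; linarith
  set T := 2 / m1 + 2 / m2 + 4 * K / (m1 * m2 * δ) + 2 with hTdef
  have hTpos : 0 < T := by
    have a1 : 0 < 2 / m1 := by positivity
    have a2 : 0 < 2 / m2 := by positivity
    have a3 : 0 < 4 * K / (m1 * m2 * δ) := by positivity
    rw [hTdef]; linarith
  refine ⟨max 1 (Real.log T), lt_of_lt_of_le one_pos (le_max_left _ _), ?_⟩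
  intro fi fj fk lij lik ljk θi hfi hlij hlik hljk hcij hcik hcjk _ _ _ hθ0 hθπ hcos
  -- bounds from the helper lemmas
  have hAlb := cosh_lb εj ηij fi fj hεj h1'
  rw [← hcij] at hAlb
  rw [show min 1 (εj + ηij) / 2 = m1 from hm1def.symm] at hAlb
  have hBlb := cosh_lb εk ηik fi fk hεk h2'
  rw [← hcik] at hBlb
  rw [show min 1 (εk + ηik) / 2 = m2 from hm2def.symm] at hBlb
  have hDub := cosh_ub εj εk ηjk fj fk hεj0 hεk0
  rw [← hcjk] at hDub
  rw [show (1 + |ηjk|) = K from hKdef.symm] at hDub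
  set Si := Real.exp fi with hSi
  set Sj := Real.exp fj with hSj
  set Sk := Real.exp fk with hSk
  set Cj := Real.sqrt (1 + εj * Real.exp (2 * fj)) with hCj
  set Ck := Real.sqrt (1 + εk * Real.exp (2 * fk)) with hCk
  have hSipos : 0 < Si := Real.exp_pos fi
  have hSjpos : 0 < Sj := Real.exp_pos fj
  have hSkpos : 0 < Sk := Real.exp_pos fk
  have hCj1 : 1 ≤ Cj := by
    rw [hCj, Real.one_le_sqrt]
    have := mul_nonneg hεj0 (Real.exp_pos (2 * fj)).le; linarith
  have hCk1 : 1 ≤ Ck := by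
    rw [hCk, Real.one_le_sqrt]
    have := mul_nonneg hεk0 (Real.exp_pos (2 * fk)).le; linarith
  have hMj : 1 ≤ Cj + Sj := by linarith
  have hMk : 1 ≤ Ck + Sk := by linarith
  have hTSi : T < Si := by
    have hlog : Real.log T < fi := lt_of_le_of_lt (le_max_right 1 (Real.log T)) hfi
    calc T = Real.exp (Real.log T) := (Real.exp_log hTpos).symm
    _ < Si := Real.exp_lt_exp.mpr hlog
  have hSi1 : 1 < Si := by
    have a1 : 0 < 2 / m1 := by positivity
    have a2 : 0 < 2 / m2 := by positivity
    have a3 : 0 < 4 * K / (m1 * m2 * δ) := by positivity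
    rw [hTdef] at hTSi; linarith
  -- cosh lij and cosh lik are at least 2
  have hm1Si : 2 < m1 * Si := by
    have a2 : 0 < 2 / m2 := by positivity
    have a3 : 0 < 4 * K / (m1 * m2 * δ) := by positivity
    have : 2 / m1 < Si := by rw [hTdef] at hTSi; linarith
    have := (div_lt_iff₀ hm1).mp this
    linarith
  have hm2Si : 2 < m2 * Si := by
    have a1 : 0 < 2 / m1 := by positivity
    have a3 : 0 < 4 * K / (m1 * m2 * δ) := by positivity
    have : 2 / m2 < Si := by rw [hTdef] at hTSi; linarith
    have := (div_lt_iff₀ hm2).mp this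
    linarith
  have hA2 : 2 ≤ Real.cosh lij := cosh_ge_two m1 Si (Cj + Sj) _ hm1 hSipos hMj hm1Si hAlb
  have hB2 : 2 ≤ Real.cosh lik := cosh_ge_two m2 Si (Ck + Sk) _ hm2 hSipos hMk hm2Si hBlb
  have hP : 0 < Real.sinh lij := Real.sinh_pos_iff.mpr hlij
  have hQ : 0 < Real.sinh lik := Real.sinh_pos_iff.mpr hlik
  have hPA : Real.cosh lij ≤ 2 * Real.sinh lij := sinh_lb' _ _ hA2 hP (Real.cosh_sq lij)
  have hQB : Real.cosh lik ≤ 2 * Real.sinh lik := sinh_lb' _ _ hB2 hQ (Real.cosh_sq lik)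
  have hPlb : m1 * (Si * (Cj + Sj)) / 2 ≤ Real.sinh lij := by linarith
  have hQlb : m2 * (Si * (Ck + Sk)) / 2 ≤ Real.sinh lik := by linarith
  have hPQlb : (m1 * (Si * (Cj + Sj)) / 2) * (m2 * (Si * (Ck + Sk)) / 2)
      ≤ Real.sinh lij * Real.sinh lik := by
    apply mul_le_mul hPlb hQlb _ hP.le
    positivity
  have hKSi : 4 * K < m1 * m2 * δ * Si ^ 2 := by
    have a1 : 0 < 2 / m1 := by positivity
    have a2 : 0 < 2 / m2 := by positivity
    have h4K : 4 * K / (m1 * m2 * δ) < Si := by rw [hTdef] at hTSi; linarith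
    have := (div_lt_iff₀ (by positivity : 0 < m1 * m2 * δ)).mp h4K
    exact sq_boost K (m1 * m2 * δ) Si (by positivity) hSi1 this
  have hDlt : Real.cosh ljk < δ * (Real.sinh lij * Real.sinh lik) := by
    have hstep : K * ((Cj + Sj) * (Ck + Sk))
        < δ * ((m1 * (Si * (Cj + Sj)) / 2) * (m2 * (Si * (Ck + Sk)) / 2)) :=
      ub_step K δ m1 m2 Si _ _ hδ hm1 hm2 hSipos hMj hMk hKSi
    calc Real.cosh ljk ≤ K * ((Cj + Sj) * (Ck + Sk)) := hDub
    _ < δ * ((m1 * (Si * (Cj + Sj)) / 2) * (m2 * (Si * (Ck + Sk)) / 2)) := hstep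
    _ ≤ δ * (Real.sinh lij * Real.sinh lik) := by
        exact mul_le_mul_of_nonneg_left hPQlb hδ.le
  have hPQpos : 0 < Real.sinh lij * Real.sinh lik := mul_pos hP hQ
  have hABPQ : Real.sinh lij * Real.sinh lik ≤ Real.cosh lij * Real.cosh lik :=
    mul_le_mul (Real.sinh_lt_cosh lij).le (Real.sinh_lt_cosh lik).le hQ.le (Real.cosh_pos lij).le
  have hε'ε : ε' ≤ ε := by rw [hε'def]; exact min_le_left _ _
  clear_value Si Sj Sk Cj Ck T K m1 m2 δ ε'
  have hgt : Real.cos ε' < Real.cos θi := by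
    rw [hcos, lt_div_iff₀ hPQpos]
    have hcc : Real.cos ε' = 1 - δ := by rw [hδdef]; ring
    rw [hcc]
    have hexp : (1 - δ) * (Real.sinh lij * Real.sinh lik)
        = Real.sinh lij * Real.sinh lik - δ * (Real.sinh lij * Real.sinh lik) := by ring
    rw [hexp]
    linarith [hDlt, hABPQ]
  -- conclude
  by_contra hcon
  push_neg at hcon
  have hε'θ : ε' ≤ θi := le_trans hε'ε hcon
  rcases eq_or_lt_of_le hε'θ with h | h
  · rw [h] at hgt; exact lt_irrefl _ hgt
  · have := Real.strictAntiOn_cos ⟨hε'pos.le, hε'pi⟩ ⟨hθ0, hθπ⟩ h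
    linarith
end
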